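/- arXiv:2511.12656 — 3 statements merged into one kernel-verified Lean document; each statement's English description precedes it below -/
import Mathlib

section
/- For every r ≥ 1 there exists a 1-D cellular automaton A of radius r over the alphabet Σ = {⊥} ∪ {a₋ᵣ,…,a₋₁, a₁,…,aᵣ} (2r non-quiescent symbols) and a finite initial configuration c₀ = ⊥^ω a₋ᵣ ⋯ a₋₁ a₁ ⋯ aᵣ ⊥^ω such that for all n ≥ 0, G^n(c₀) = ⊥^ω a₋ᵣ^{n+1} ⋯ a₋₁^{n+1} a₁^{n+1} ⋯ aᵣ^{n+1} ⊥^ω. Hence the language { a₋ᵣⁿ ⋯ a₋₁ⁿ a₁ⁿ ⋯ aᵣⁿ | n ≥ 1 } is generated by a radius-r CA. -/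
/-- Global map of a 1-D cellular automaton of radius `r` with local rule `f`. -/
def glob {α : Type*} (r : ℕ) (f : (Fin (2 * r + 1) → α) → α) (c : ℤ → α) : ℤ → α :=
  fun z => f (fun j => c (z + (j.val : ℤ) - (r : ℤ)))

/-- The finite configuration `⊥^ω w ⊥^ω`, with `w` placed at positions `0, …, |w| - 1`. -/
def padW {α : Type*} (bot : α) (w : List α) : ℤ → α :=
  fun z => if 0 ≤ z ∧ z < (w.length : ℤ) then w.getD z.toNat bot else bot

/-- The word `a₋ᵣ^m ⋯ a₋₁^m a₁^m ⋯ aᵣ^m`: each of the `2r` non-quiescent symbols (encoded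
as `some k` for `k : Fin (2r)`, listed in order) repeated `m` times. -/
def blockWord (r m : ℕ) : List (Option (Fin (2 * r))) :=
  ((List.finRange (2 * r)).map (fun k => List.replicate m (some k))).flatten

/-!
Number the non-quiescent symbols `k = 0, …, 2r - 1` (so `k` is `a_{k-r}` for `k < r` and
`a_{k-r+1}` for `k ≥ r`). With the word `blockWord r (n + 1)` placed so that its left end is at
`-r n`, block `k` after `n + 1` steps is exactly the union of block `k` after `n` steps translated
by `k - r` and by `k - r + 1`. Both translations are within radius `r`, so the rule "write `k`
wherever `k` is seen at offset `-(k - r)` or `-(k - r + 1)`" grows every block by one cell per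
step. Conversely, a `⊥`-free word is determined by any translate of its padded configuration, so
the words that appear are exactly the `blockWord r m` with `m ≥ 1`.
-/

section PaddedWord

variable {α : Type*} {bot : α} {w v : List α}

lemma padW_natCast (i : ℕ) : padW bot w i = w.getD i bot := by
  unfold padW
  split_ifs with hi
  · rw [Int.toNat_natCast]
  · rw [List.getD_eq_default _ _ (by omega)]

lemma padW_ne_iff (hw : bot ∉ w) (z : ℤ) : padW bot w z ≠ bot ↔ 0 ≤ z ∧ z < w.length := by
  unfold padW
  split_ifs with hz
  · refine iff_of_true (fun h => hw ?_) hz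
    rw [List.getD_eq_getElem _ _ (by omega)] at h
    exact h ▸ List.getElem_mem _
  · simpa using hz

lemma eq_of_padW_sub_eq (hw : bot ∉ w) (hv : bot ∉ v) {s t : ℤ}
    (h : ∀ z, padW bot w (z - s) = padW bot v (z - t)) : w = v := by
  have hIco : Set.Ico s (s + w.length) = Set.Ico t (t + v.length) := by
    ext z
    have := h z
    rw [Set.mem_Ico, Set.mem_Ico, ← sub_nonneg, ← sub_lt_iff_lt_add', ← padW_ne_iff hw,
      ← sub_nonneg, ← sub_lt_iff_lt_add', ← padW_ne_iff hv, h]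
  rcases Nat.eq_zero_or_pos w.length with hw_nil | hw_pos
  · rw [hw_nil, Nat.cast_zero, add_zero, Set.Ico_self, eq_comm, Set.Ico_eq_empty_iff] at hIco
    rw [List.length_eq_zero_iff.mp hw_nil, eq_comm, ← List.length_eq_zero_iff]
    omega
  obtain ⟨rfl, hlen⟩ := (Set.Ico_eq_Ico_iff (by omega)).mp hIco
  refine List.ext_getElem (by omega) fun i hiw hiv => ?_
  simpa [padW_natCast, List.getD_eq_getElem, hiw, hiv] using h (i + s)

end PaddedWord

lemma blockWord_eq_ofFn (r m : ℕ) :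
    blockWord r m = List.ofFn fun i : Fin (2 * r * m) =>
      some ⟨i / m, Nat.div_lt_of_lt_mul (by simpa [mul_comm] using i.isLt)⟩ := by
  rw [List.ofFn_mul, blockWord, ← List.ofFn_eq_map]
  congr 2
  funext k
  rw [← List.ofFn_const]
  congr! 2 with j
  have hdiv : (k * m + j) / m = k :=
    Nat.div_eq_of_lt_le (Nat.le_add_right _ _) (by rw [add_mul, one_mul]; omega)
  simp [hdiv]

lemma none_notMem_blockWord (r m : ℕ) : none ∉ blockWord r m := by
  simp [blockWord]

lemma getD_blockWord_eq_some {r m i : ℕ} {k : Fin (2 * r)} :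
    (blockWord r m).getD i none = some k ↔ k * m ≤ i ∧ i < (k + 1) * m := by
  by_cases hi : i < 2 * r * m
  · have hm : 0 < m := Nat.pos_of_ne_zero (by rintro rfl; simp at hi)
    rw [blockWord_eq_ofFn, List.getD_eq_getElem _ _ (by simpa using hi), List.getElem_ofFn,
      Option.some_inj, Fin.ext_iff, Nat.div_eq_iff hm, add_mul, one_mul]
    dsimp only
    omega
  · rw [List.getD_eq_default _ _ (by simpa [blockWord_eq_ofFn] using hi)]
    have hk : (k + 1) * m ≤ 2 * r * m := Nat.mul_le_mul_right _ k.isLt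
    simp only [reduceCtorEq, false_iff]
    omega

lemma padW_blockWord_eq_some {r m : ℕ} {z : ℤ} {k : Fin (2 * r)} :
    padW none (blockWord r m) z = some k ↔ k * m ≤ z ∧ z < (k + 1) * m := by
  rcases lt_or_ge z 0 with hz | hz
  · have : (0 : ℤ) ≤ k * m := by positivity
    simp only [padW, not_le.mpr hz, false_and, if_false, reduceCtorEq, false_iff]
    omega
  · lift z to ℕ using hz
    rw [padW_natCast, getD_blockWord_eq_some]
    norm_cast

def blockConfig (r n : ℕ) : ℤ → Option (Fin (2 * r)) :=
  fun z => padW none (blockWord r (n + 1)) (z + r * n)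

lemma blockConfig_eq_some_iff {r n : ℕ} {z : ℤ} {k : Fin (2 * r)} :
    blockConfig r n z = some k ↔ k * (n + 1) ≤ z + r * n ∧ z + r * n < (k + 1) * (n + 1) := by
  simp [blockConfig, padW_blockWord_eq_some]

lemma blockConfig_succ_eq_some_iff {r n : ℕ} {z : ℤ} {k : Fin (2 * r)} :
    blockConfig r (n + 1) z = some k ↔
      blockConfig r n (z - (k - r)) = some k ∨ blockConfig r n (z - (k - r + 1)) = some k := by
  simp only [blockConfig_eq_some_iff]
  push_cast
  ring_nf
  omega

lemma dite_exists_eq_of_forall_iff {β : Type*} {P : β → Prop} [Decidable (∃ b, P b)]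
    {x : Option β} (h : ∀ b, P b ↔ x = some b) :
    (if hP : ∃ b, P b then some hP.choose else none) = x := by
  split_ifs with hP
  · exact ((h _).mp hP.choose_spec).symm
  · cases x with
    | none => rfl
    | some b => exact absurd ⟨b, (h b).mpr rfl⟩ hP

open Classical in
noncomputable def growthRule (r : ℕ) (w : Fin (2 * r + 1) → Option (Fin (2 * r))) :
    Option (Fin (2 * r)) :=
  if h : ∃ k : Fin (2 * r),
      w ⟨2 * r - k, by omega⟩ = some k ∨ w ⟨2 * r - 1 - k, by omega⟩ = some k
  then some h.choose else none

lemma growthRule_const_none (r : ℕ) : growthRule r (fun _ => none) = none := by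
  simp [growthRule]

lemma glob_growthRule_blockConfig (r n : ℕ) :
    glob r (growthRule r) (blockConfig r n) = blockConfig r (n + 1) := by
  funext z
  refine dite_exists_eq_of_forall_iff fun k => ?_
  have hk := k.isLt
  rw [blockConfig_succ_eq_some_iff]
  congr! 3 <;> dsimp only <;> omega

lemma iterate_glob_growthRule (r n : ℕ) :
    (glob r (growthRule r))^[n] (padW none (blockWord r 1)) = blockConfig r n := by
  induction n with
  | zero => funext z; simp [blockConfig]
  | succ n ih => rw [Function.iterate_succ_apply', ih, glob_growthRule_blockConfig]

theorem stmt11_general (r : ℕ) :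
    ∃ f : (Fin (2 * r + 1) → Option (Fin (2 * r))) → Option (Fin (2 * r)),
      f (fun _ => none) = none ∧
      (∀ n : ℕ, ∃ s : ℤ, ∀ z : ℤ,
        (glob r f)^[n] (padW none (blockWord r 1)) z = padW none (blockWord r (n + 1)) (z - s)) ∧
      ({ w : List (Option (Fin (2 * r))) | none ∉ w ∧
          ∃ (n : ℕ) (s : ℤ), ∀ z : ℤ,
            (glob r f)^[n] (padW none (blockWord r 1)) z = padW none w (z - s) }
        = { w : List (Option (Fin (2 * r))) | ∃ m : ℕ, 1 ≤ m ∧ w = blockWord r m }) := by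
  have orbit (n : ℕ) (z : ℤ) : (glob r (growthRule r))^[n] (padW none (blockWord r 1)) z =
      padW none (blockWord r (n + 1)) (z - -(r * n)) := by
    rw [iterate_glob_growthRule, blockConfig, sub_neg_eq_add]
  refine ⟨growthRule r, growthRule_const_none r, fun n => ⟨_, orbit n⟩, Set.ext fun w => ?_⟩
  constructor
  · rintro ⟨hw, n, s, hn⟩
    exact ⟨n + 1, Nat.le_add_left 1 n, eq_of_padW_sub_eq hw (none_notMem_blockWord r (n + 1))
      fun z => (hn z).symm.trans (orbit n z)⟩
  · rintro ⟨m, hm, rfl⟩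
    obtain ⟨n, rfl⟩ := Nat.exists_eq_add_of_le' hm
    exact ⟨none_notMem_blockWord r (n + 1), n, _, orbit n⟩

/-- For every `r ≥ 1` there is a radius-`r` CA over the alphabet `{⊥} ∪ {a₋ᵣ,…,a₋₁,a₁,…,aᵣ}`
(`⊥` = `none`, the `2r` non-quiescent symbols = `Fin (2r)`) such that from the initial
configuration `⊥^ω a₋ᵣ ⋯ a₋₁ a₁ ⋯ aᵣ ⊥^ω` one has, for all `n ≥ 0`,
`G^n(c₀) = ⊥^ω a₋ᵣ^{n+1} ⋯ a₋₁^{n+1} a₁^{n+1} ⋯ aᵣ^{n+1} ⊥^ω` (up to position shift); hence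
the language `{a₋ᵣⁿ ⋯ a₋₁ⁿ a₁ⁿ ⋯ aᵣⁿ | n ≥ 1}` is generated by a radius-`r` CA. -/
theorem stmt11 (r : ℕ) (hr : 1 ≤ r) :
    ∃ f : (Fin (2 * r + 1) → Option (Fin (2 * r))) → Option (Fin (2 * r)),
      f (fun _ => none) = none ∧
      (∀ n : ℕ, ∃ s : ℤ, ∀ z : ℤ,
        (glob r f)^[n] (padW none (blockWord r 1)) z = padW none (blockWord r (n + 1)) (z - s)) ∧
      ({ w : List (Option (Fin (2 * r))) | none ∉ w ∧
          ∃ (n : ℕ) (s : ℤ), ∀ z : ℤ,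
            (glob r f)^[n] (padW none (blockWord r 1)) z = padW none w (z - s) }
        = { w : List (Option (Fin (2 * r))) | ∃ m : ℕ, 1 ≤ m ∧ w = blockWord r m }) :=
  stmt11_general r
end

section
/- Let w ∈ Σ⁺ with |w| = k and let s ∈ ℤ with max(|s|, |s + k|) ≤ r. Then there exists a 1-D cellular automaton A of radius r over Σ ∪ {⊥} with initial configuration c₀ = ⊥^ω w ⊥^ω such that G^n(c₀) = ⊥^ω w^{n+1} ⊥^ω (up to a position shift of n·s) for all n ≥ 0. In particular the language { wⁿ | n ≥ 1 } is generated by a CA of radius max(|s|, |s+k|). -/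
/-- The local rule: shift by `s` and copy a new block from distance `s + k`. -/
def caRule {α : Type*} (r : ℕ) (s : ℤ) (k : ℕ) (g : Fin (2 * r + 1) → Option α) : Option α :=
  if h : ((r : ℤ) - s).toNat < 2 * r + 1 ∧ ((r : ℤ) - s - k).toNat < 2 * r + 1 then
    match g ⟨((r : ℤ) - s).toNat, h.1⟩ with
    | some a => some a
    | none => g ⟨((r : ℤ) - s - k).toNat, h.2⟩
  else none

lemma padW_out {α : Type*} (l : List (Option α)) (z : ℤ)
    (h : ¬ (0 ≤ z ∧ z < (l.length : ℤ))) : padW none l z = none := by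
  simp [padW, h]

lemma padW_in {α : Type*} (l : List (Option α)) (z : ℤ) (h0 : 0 ≤ z)
    (h1 : z < (l.length : ℤ)) : padW none l z = l.getD z.toNat none := by
  simp [padW, h0, h1]

lemma padW_isSome_iff {α : Type*} (l : List (Option α)) (hl : none ∉ l) (z : ℤ) :
    (padW none l z).isSome ↔ (0 ≤ z ∧ z < (l.length : ℤ)) := by
  constructor
  · intro h
    by_contra hc
    rw [padW_out l z hc] at h
    simp at h
  · rintro ⟨h0, h1⟩
    rw [padW_in l z h0 h1]
    have hz : z.toNat < l.length := by omega
    rw [List.getD_eq_getElem l none hz]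
    have : l[z.toNat] ∈ l := List.getElem_mem hz
    cases hx : l[z.toNat] with
    | none => exact absurd (hx ▸ this) hl
    | some a => simp

/-- the key computation: one step of the CA appends a copy of the block `B`. -/
lemma glob_step {α : Type*} (r k : ℕ) (s : ℤ) (hk : 0 < k)
    (hs1 : -(r : ℤ) ≤ s) (hs2 : s ≤ r) (ht1 : -(r : ℤ) ≤ s + k) (ht2 : s + (k : ℤ) ≤ r)
    (A B : List (Option α)) (hU : none ∉ A ++ B) (hBlen : B.length = k)
    (a z : ℤ) :
    glob r (caRule r s k) (fun y => padW none (A ++ B) (y - a)) z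
      = padW none ((A ++ B) ++ B) (z - a - s) := by
  have hb1 : ((r : ℤ) - s).toNat < 2 * r + 1 := by omega
  have hb2 : ((r : ℤ) - s - k).toNat < 2 * r + 1 := by omega
  set U : List (Option α) := A ++ B with hUdef
  have hUlen : (U.length : ℤ) = (A.length : ℤ) + k := by
    simp [hUdef, hBlen]
  have hkleU : (k : ℤ) ≤ (U.length : ℤ) := by omega
  set x : ℤ := z - a - s with hx
  have e1 : z + (((r : ℤ) - s).toNat : ℤ) - r - a = x := by omega
  have e2 : z + (((r : ℤ) - s - k).toNat : ℤ) - r - a = x - k := by omega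
  have hglob : glob r (caRule r s k) (fun y => padW none U (y - a)) z
      = (match padW none U x with
         | some b => some b
         | none => padW none U (x - k)) := by
    simp only [glob, caRule, dif_pos (And.intro hb1 hb2)]
    rw [e1, e2]
  rw [hglob]
  have hlen2 : (((U ++ B).length : ℤ)) = (U.length : ℤ) + k := by simp [hBlen]
  by_cases h1 : 0 ≤ x ∧ x < (U.length : ℤ)
  · -- inside the old block
    have hrange : x.toNat < U.length := by omega
    have hsome : (padW none U x).isSome := (padW_isSome_iff U hU x).2 h1
    obtain ⟨b, hb⟩ := Option.isSome_iff_exists.1 hsome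
    rw [hb]
    rw [padW_in _ _ h1.1 (by omega), List.getD_append _ _ _ _ hrange]
    rw [padW_in _ _ h1.1 h1.2] at hb
    exact hb.symm
  · by_cases h2 : (U.length : ℤ) ≤ x ∧ x < (U.length : ℤ) + k
    · -- the new block region
      have hnone : padW none U x = none := padW_out U x (by omega)
      rw [hnone]
      have h0' : 0 ≤ x - k := by omega
      have h1' : x - k < (U.length : ℤ) := by omega
      rw [padW_in _ _ h0' h1', padW_in _ _ (by omega) (by omega)]
      have hxk : (x - k).toNat = x.toNat - k := by omega
      rw [hxk]
      have hge : U.length ≤ x.toNat := by omega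
      rw [List.getD_append_right _ _ _ _ hge]
      have hge2 : A.length ≤ x.toNat - k := by
        have : (A.length : ℤ) = (U.length : ℤ) - k := by omega
        omega
      have hmid : U.getD (x.toNat - k) none = B.getD (x.toNat - k - A.length) none := by
        rw [hUdef]; exact List.getD_append_right _ _ _ _ hge2
      rw [hmid]
      have hAlen : U.length = A.length + k := by simp [hUdef, hBlen]
      have hidx : x.toNat - k - A.length = x.toNat - U.length := by omega
      rw [hidx]
    · -- outside everything
      have hnone : padW none U x = none := padW_out U x (by omega)
      rw [hnone]
      rw [padW_out _ _ (by omega), padW_out _ _ (by omega)]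

lemma blocks_succ {α : Type*} (w : List α) (m : ℕ) :
    ((List.replicate (m + 1) w).flatten).map (some : α → Option α)
      = ((List.replicate m w).flatten).map some ++ w.map some := by
  rw [List.replicate_succ', List.flatten_append]
  simp

lemma none_notMem_blocks {α : Type*} (w : List α) (m : ℕ) :
    (none : Option α) ∉ ((List.replicate m w).flatten).map some := by
  simp [List.mem_map]

/-- Shift & Concatenate: for `w ∈ Σ⁺` with `|w| = k` and a shift `s ∈ ℤ` with
`max(|s|, |s + k|) ≤ r`, there is a radius-`r` CA over `Σ ∪ {⊥}` (`⊥` = `none`) such that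
from `c₀ = ⊥^ω w ⊥^ω` one has `G^n(c₀) = ⊥^ω w^{n+1} ⊥^ω` up to a position shift of `n·s`;
in particular the language `{wⁿ | n ≥ 1}` (up to shift) is generated by this CA. -/
theorem stmt12 {α : Type*} (w : List α) (hw : w ≠ []) (s : ℤ) (r : ℕ)
    (hr : max |s| |s + (w.length : ℤ)| ≤ (r : ℤ)) :
    ∃ f : (Fin (2 * r + 1) → Option α) → Option α,
      f (fun _ => none) = none ∧
      (∀ (n : ℕ) (z : ℤ),
        (glob r f)^[n] (padW none (w.map some)) z =
          padW none (((List.replicate (n + 1) w).flatten).map some) (z - (n : ℤ) * s)) ∧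
      ({ v : List (Option α) | none ∉ v ∧
          ∃ (n : ℕ) (t : ℤ), ∀ z : ℤ,
            (glob r f)^[n] (padW none (w.map some)) z = padW none v (z - t) }
        = { v : List (Option α) | ∃ m : ℕ, 1 ≤ m ∧
            v = ((List.replicate m w).flatten).map some }) := by
  set k := w.length with hkdef
  have hk : 0 < k := List.length_pos_iff.2 hw
  have hs : |s| ≤ (r : ℤ) := le_trans (le_max_left _ _) hr
  have hsk : |s + (k : ℤ)| ≤ (r : ℤ) := le_trans (le_max_right _ _) hr
  rw [abs_le] at hs hsk
  have main : ∀ (n : ℕ) (z : ℤ),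
      (glob r (caRule r s k))^[n] (padW none (w.map some)) z =
        padW none (((List.replicate (n + 1) w).flatten).map some) (z - (n : ℤ) * s) := by
    intro n
    induction n with
    | zero =>
      intro z
      simp only [Function.iterate_zero, id_eq, Nat.cast_zero, zero_mul, sub_zero]
      congr 1
      simp
    | succ n ih =>
      intro z
      rw [Function.iterate_succ_apply']
      have hfun : (glob r (caRule r s k))^[n] (padW none (w.map some))
          = fun y => padW none
              ((((List.replicate n w).flatten).map some) ++ w.map some) (y - (n : ℤ) * s) := by
        funext y
        rw [ih y, ← blocks_succ]
      rw [hfun]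
      rw [glob_step r k s hk hs.1 hs.2 hsk.1 hsk.2 _ _
        (by rw [← blocks_succ]; exact none_notMem_blocks w (n + 1))
        (by simp [hkdef]) ((n : ℤ) * s) z]
      rw [← blocks_succ, ← blocks_succ]
      congr 1
      push_cast
      ring
  refine ⟨caRule r s k, ?_, main, ?_⟩
  · -- quiescence
    unfold caRule
    split <;> simp
  · -- language equality
    ext v
    simp only [Set.mem_setOf_eq]
    constructor
    · rintro ⟨hv, n, t, hvt⟩
      set U : List (Option α) := ((List.replicate (n + 1) w).flatten).map some with hUdef
      have hUnone : none ∉ U := none_notMem_blocks w (n + 1)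
      have hUlen : 0 < U.length := by
        simp [hUdef, List.length_flatten]
        exact hk
      set d : ℤ := t - (n : ℤ) * s with hd
      have H : ∀ y : ℤ, padW none U y = padW none v (y - d) := by
        intro y
        have h1 := hvt (y + (n : ℤ) * s)
        rw [main n (y + (n : ℤ) * s)] at h1
        have e1 : y + (n : ℤ) * s - (n : ℤ) * s = y := by ring
        have e2 : y + (n : ℤ) * s - t = y - d := by rw [hd]; ring
        rw [e1, e2] at h1
        exact h1
      have Hiff : ∀ y : ℤ, (0 ≤ y ∧ y < (U.length : ℤ)) ↔
          (0 ≤ y - d ∧ y - d < (v.length : ℤ)) := by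
        intro y
        rw [← padW_isSome_iff U hUnone y, ← padW_isSome_iff v hv (y - d), H y]
      have hv0 : 0 < v.length := by
        by_contra h
        have := (Hiff 0).1 ⟨le_refl 0, by omega⟩
        omega
      have hd0 : d = 0 := by
        have h1 := (Hiff 0).1 ⟨le_refl 0, by omega⟩
        have h2 := (Hiff d).2 ⟨by omega, by omega⟩
        omega
      have hlen : U.length = v.length := by
        have h1 := (Hiff ((U.length : ℤ) - 1)).1 ⟨by omega, by omega⟩
        have h2 := (Hiff ((v.length : ℤ) - 1)).2 ⟨by omega, by omega⟩
        omega
      refine ⟨n + 1, by omega, ?_⟩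
      rw [← hUdef]
      apply List.ext_getElem hlen.symm
      intro i hi1 hi2
      have hH := H (i : ℤ)
      rw [hd0, sub_zero] at hH
      rw [padW_in U _ (by omega) (by omega), padW_in v _ (by omega) (by omega)] at hH
      rw [Int.toNat_natCast] at hH
      rw [List.getD_eq_getElem U none hi2, List.getD_eq_getElem v none hi1] at hH
      exact hH.symm
    · rintro ⟨m, hm, rfl⟩
      refine ⟨none_notMem_blocks w m, m - 1, ((m - 1 : ℕ) : ℤ) * s, ?_⟩
      intro z
      have hm1 : m - 1 + 1 = m := by omega
      rw [main (m - 1) z, hm1]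
end

section
/- Let w₁, w₂ ∈ Σ⁺ with lengths k₁, k₂, and r = ⌈(k₁+k₂)/2⌉. Then there exists a 1-D cellular automaton of radius r over Σ ∪ {⊥} and finite initial configuration c₀ = ⊥^ω w₁ w₂ ⊥^ω such that for all n ≥ 0, G^n(c₀) equals ⊥^ω w₁^{n+1} w₂^{n+1} ⊥^ω up to a position shift; hence the language { w₁ⁿ w₂ⁿ | n ≥ 1 } is generated by a radius-⌈(k₁+k₂)/2⌉ CA. -/
/-!
One step of the automaton replaces a non-blank block `u` starting at cell `0` by the block
`w₁ u w₂` starting at cell `-r`. A cell locates itself relative to the block from the first and last non-blank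
cells of its window; `|w₁| + |w₂| ≤ 2r` makes the window wide enough for that. Iterating from
`u = w₁ w₂` gives `w₁^{n+1} w₂^{n+1}`, and since a block without blanks is recovered from any
shift of its configuration, these are exactly the words generated.
-/

open Finset

section

variable {α : Type*}

lemma isSome_padW_none {v : List (Option α)} (hv : none ∉ v) (z : ℤ) :
    (padW none v z).isSome ↔ 0 ≤ z ∧ z < v.length := by
  unfold padW
  split_ifs with h
  · rw [List.getD_eq_getElem v none (by omega), Option.isSome_iff_ne_none]
    exact iff_of_true (fun hc => hv (hc ▸ List.getElem_mem _)) h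
  · simpa using h

lemma padW_none_map_some (u : List α) (z : ℤ) :
    padW none (u.map some) z = if 0 ≤ z then u[z.toNat]? else none := by
  unfold padW
  simp only [List.length_map]
  split_ifs with h h' h' <;> try omega
  · rw [List.getD_eq_getElem?_getD, List.getElem?_map]
    rcases u[z.toNat]? with _ | a <;> rfl
  · rw [List.getElem?_eq_none (by omega)]
  · rfl

lemma Fin.val_min'_eq_of_mem_iff {N : ℕ} {s : Finset (Fin (N + 1))} {a b : ℤ}
    (hs : ∀ j : Fin (N + 1), j ∈ s ↔ a ≤ j ∧ (j : ℤ) < b) (h : s.Nonempty) :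
    ((s.min' h : ℕ) : ℤ) = max a 0 := by
  obtain ⟨j, hj⟩ := id h
  have hj := (hs j).1 hj
  have hjN : (j : ℤ) ≤ N := by have := j.isLt; omega
  have hleast : IsLeast (s : Set (Fin (N + 1))) ⟨(max a 0).toNat, by omega⟩ := by
    refine ⟨(hs _).2 (by simp only; omega), fun i hi => ?_⟩
    have := (hs i).1 hi
    rw [Fin.le_def]; simp only; omega
  rw [(s.isLeast_min' _).unique hleast]
  simp only; omega

lemma Fin.val_max'_eq_of_mem_iff {N : ℕ} {s : Finset (Fin (N + 1))} {a b : ℤ}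
    (hs : ∀ j : Fin (N + 1), j ∈ s ↔ a ≤ j ∧ (j : ℤ) < b) (h : s.Nonempty) :
    ((s.max' h : ℕ) : ℤ) = min (b - 1) N := by
  obtain ⟨j, hj⟩ := id h
  have hj := (hs j).1 hj
  have hjN : (j : ℤ) ≤ N := by have := j.isLt; omega
  have hgreatest : IsGreatest (s : Set (Fin (N + 1))) ⟨(min (b - 1) N).toNat, by omega⟩ := by
    refine ⟨(hs _).2 (by simp only; omega), fun i hi => ?_⟩
    have := (hs i).1 hi
    have := i.isLt
    rw [Fin.le_def]; simp only; omega
  rw [(s.isGreatest_max' _).unique hgreatest]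
  simp only; omega

def occupied {n : ℕ} (W : Fin n → Option α) : Finset (Fin n) :=
  univ.filter fun j => (W j).isSome

/-- The cell that will hold position `p` of the new block `w₁ ++ u ++ w₂` sees the old positions
`p - 2r, …, p` of `u`, so the first cell of `u`, if visible, sits at window index `2r - p`, and its
last at `2r - p + |u| - 1`. -/
def growRule (w₁ w₂ : List α) (r : ℕ) (W : Fin (2 * r + 1) → Option α) : Option α :=
  if h : (occupied W).Nonempty then
    if 2 * r - w₁.length < (occupied W).min' h then w₁[2 * r - (occupied W).min' h]?
    else if (occupied W).max' h < 2 * r - w₁.length then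
      w₂[2 * r - w₁.length - 1 - (occupied W).max' h]?
    else W ⟨2 * r - w₁.length, by omega⟩
  else none

lemma growRule_blank (w₁ w₂ : List α) (r : ℕ) : growRule w₁ w₂ r (fun _ => none) = none := by
  simp [growRule, occupied]

theorem glob_growRule_padW {w₁ w₂ u : List α} {r : ℕ} (hr : w₁.length + w₂.length ≤ 2 * r)
    (hu : u ≠ []) (z : ℤ) :
    glob r (growRule w₁ w₂ r) (padW none (u.map some)) z =
      padW none ((w₁ ++ u ++ w₂).map some) (z + r) := by
  set W : Fin (2 * r + 1) → Option α := fun j => padW none (u.map some) (z + j - r)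
  have hmem (j : Fin (2 * r + 1)) : j ∈ occupied W ↔ (r - z ≤ j ∧ (j : ℤ) < u.length + r - z) := by
    simp only [occupied, mem_filter, mem_univ, true_and, W,
      isSome_padW_none (v := u.map some) (by simp), List.length_map]
    omega
  have hℓ : 0 < u.length := List.length_pos_iff.2 hu
  change growRule w₁ w₂ r W = _
  rw [padW_none_map_some, growRule]
  by_cases hne : (occupied W).Nonempty
  swap
  · have hout : z + r < 0 ∨ u.length + 2 * r ≤ z + r := by
      by_contra! h
      exact hne ⟨⟨(max (r - z) 0).toNat, by omega⟩, (hmem _).2 (by simp only; omega)⟩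
    rw [dif_neg hne]
    split_ifs
    · rw [List.getElem?_eq_none (by simp only [List.length_append]; omega)]
    · rfl
  have hmin := Fin.val_min'_eq_of_mem_iff hmem hne
  have hmax := Fin.val_max'_eq_of_mem_iff hmem hne
  have hmin_le := (occupied W).min'_le _ ((occupied W).max'_mem hne)
  rw [Fin.le_def] at hmin_le
  rw [dif_pos hne]
  generalize (occupied W).min' hne = jmin at *
  generalize (occupied W).max' hne = jmax at *
  obtain ⟨p, hp⟩ : ∃ p : ℕ, z + r = p := ⟨(z + r).toNat, by omega⟩
  rw [hp, if_pos (Int.natCast_nonneg p), Int.toNat_natCast]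
  split_ifs with hleft hright
  · rw [List.append_assoc, List.getElem?_append_left (by omega)]
    congr 1
    omega
  · rw [List.getElem?_append_right (by simp only [List.length_append]; omega)]
    simp only [List.length_append]
    congr 1
    omega
  · simp only [W, padW_none_map_some]
    rw [if_pos (by omega), List.append_assoc, List.getElem?_append_right (by omega),
      List.getElem?_append_left (by omega)]
    congr 1
    omega

lemma glob_comp_add_right {r : ℕ} (f : (Fin (2 * r + 1) → α) → α) (c : ℤ → α) (a z : ℤ) :
    glob r f (fun y => c (y + a)) z = glob r f c (z + a) := by
  simp only [glob]
  congr 1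
  funext j
  ring_nf

theorem iterate_glob_growRule_padW {w₁ w₂ u : List α} {r : ℕ}
    (hr : w₁.length + w₂.length ≤ 2 * r) (hu : u ≠ []) (n : ℕ) (z : ℤ) :
    (glob r (growRule w₁ w₂ r))^[n] (padW none (u.map some)) z =
      padW none (((List.replicate n w₁).flatten ++ u ++ (List.replicate n w₂).flatten).map some)
        (z + n * r) := by
  induction n generalizing z with
  | zero => simp
  | succ n ih =>
    have hne : (List.replicate n w₁).flatten ++ u ++ (List.replicate n w₂).flatten ≠ [] := by
      simp [hu]
    rw [Function.iterate_succ_apply', funext ih, glob_comp_add_right, glob_growRule_padW hr hne,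
      List.replicate_succ, List.replicate_succ']
    simp only [List.flatten_append, List.flatten_cons, List.flatten_nil, List.append_nil,
      List.append_assoc]
    push_cast
    ring_nf

theorem eq_of_padW_none_eq {v v' : List (Option α)} (hv : none ∉ v) (hv' : none ∉ v')
    (hne : v' ≠ []) {t t' : ℤ} (h : ∀ z, padW none v (z - t) = padW none v' (z - t')) :
    v = v' := by
  have hsupp (z : ℤ) : (0 ≤ z - t ∧ z - t < v.length) ↔ (0 ≤ z - t' ∧ z - t' < v'.length) := by
    rw [← isSome_padW_none hv, ← isSome_padW_none hv', h z]
  have hlen' : 0 < v'.length := List.length_pos_iff.2 hne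
  have ht : t = t' := by
    have := (hsupp t).1; have := (hsupp t').2; omega
  have hlen : v.length = v'.length := by
    have := (hsupp (t + v.length - 1)).1; have := (hsupp (t' + v'.length - 1)).2; omega
  refine List.ext_getElem hlen fun i hi hi' => ?_
  have hz := h (t + i)
  simp only [padW, ht, add_sub_cancel_left] at hz
  rwa [if_pos (by omega), if_pos (by omega), Int.toNat_natCast, List.getD_eq_getElem _ _ hi,
    List.getD_eq_getElem _ _ hi'] at hz

end

theorem stmt19_general {α : Type*} (w₁ w₂ : List α) (hw₁ : w₁ ≠ [])
    (r : ℕ) (hr : r = (w₁.length + w₂.length + 1) / 2) :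
    ∃ f : (Fin (2 * r + 1) → Option α) → Option α,
      f (fun _ => none) = none ∧
      (∀ n : ℕ, ∃ s : ℤ, ∀ z : ℤ,
        (glob r f)^[n] (padW none ((w₁ ++ w₂).map some)) z =
          padW none
            (((List.replicate (n + 1) w₁).flatten ++ (List.replicate (n + 1) w₂).flatten).map
              some) (z - s)) ∧
      ({ v : List (Option α) | none ∉ v ∧
          ∃ (n : ℕ) (t : ℤ), ∀ z : ℤ,
            (glob r f)^[n] (padW none ((w₁ ++ w₂).map some)) z = padW none v (z - t) }
        = { v : List (Option α) | ∃ m : ℕ, 1 ≤ m ∧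
            v = ((List.replicate m w₁).flatten ++ (List.replicate m w₂).flatten).map some }) := by
  have hr' : w₁.length + w₂.length ≤ 2 * r := by omega
  have orbit (n : ℕ) (z : ℤ) :
      (glob r (growRule w₁ w₂ r))^[n] (padW none ((w₁ ++ w₂).map some)) z =
        padW none (((List.replicate (n + 1) w₁).flatten ++
          (List.replicate (n + 1) w₂).flatten).map some) (z - -(n * r)) := by
    rw [iterate_glob_growRule_padW hr' (by simp [hw₁]), sub_neg_eq_add, List.replicate_succ',
      List.replicate_succ]
    simp
  refine ⟨growRule w₁ w₂ r, growRule_blank w₁ w₂ r, fun n => ⟨_, orbit n⟩, ?_⟩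
  ext v
  constructor
  · rintro ⟨hv, n, t, hvt⟩
    exact ⟨n + 1, by omega, eq_of_padW_none_eq hv (by simp) (by simp [hw₁])
      fun z => (hvt z).symm.trans (orbit n z)⟩
  · rintro ⟨m, hm, rfl⟩
    obtain ⟨n, rfl⟩ := Nat.exists_eq_add_of_le' hm
    exact ⟨by simp, n, _, orbit n⟩

/-- Two-block case: for `w₁, w₂ ∈ Σ⁺` with lengths `k₁, k₂` and `r = ⌈(k₁+k₂)/2⌉`, there
exists a radius-`r` CA over `Σ ∪ {⊥}` (`⊥` = `none`) such that from `c₀ = ⊥^ω w₁ w₂ ⊥^ω`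
one has `G^n(c₀) = ⊥^ω w₁^{n+1} w₂^{n+1} ⊥^ω` up to a position shift, for all `n ≥ 0`;
hence the language `{w₁ⁿ w₂ⁿ | n ≥ 1}` (up to shift) is generated by a radius-`r` CA. -/
theorem stmt19 {α : Type*} (w₁ w₂ : List α) (hw₁ : w₁ ≠ []) (hw₂ : w₂ ≠ [])
    (r : ℕ) (hr : r = (w₁.length + w₂.length + 1) / 2) :
    ∃ f : (Fin (2 * r + 1) → Option α) → Option α,
      f (fun _ => none) = none ∧
      (∀ n : ℕ, ∃ s : ℤ, ∀ z : ℤ,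
        (glob r f)^[n] (padW none ((w₁ ++ w₂).map some)) z =
          padW none
            (((List.replicate (n + 1) w₁).flatten ++ (List.replicate (n + 1) w₂).flatten).map
              some) (z - s)) ∧
      ({ v : List (Option α) | none ∉ v ∧
          ∃ (n : ℕ) (t : ℤ), ∀ z : ℤ,
            (glob r f)^[n] (padW none ((w₁ ++ w₂).map some)) z = padW none v (z - t) }
        = { v : List (Option α) | ∃ m : ℕ, 1 ≤ m ∧
            v = ((List.replicate m w₁).flatten ++ (List.replicate m w₂).flatten).map some }) :=
  stmt19_general w₁ w₂ hw₁ r hr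
end
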